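/- arXiv:2407.05110 — 2 statements merged into one kernel-verified Lean document; each statement's English description precedes it below -/
import Mathlib

section
/- For matrices A, B in S^n_{++} (symmetric positive definite n×n real matrices) whose Frobenius norms are at most K, one has -⟨A^{-1} - B^{-1}, A - B⟩ ≥ K^{-2} ‖A - B‖², where ⟨X,Y⟩ = tr(Xᵀ Y) and ‖·‖ is the Frobenius norm. -/
/-!
With `D = A - B` one has `A⁻¹ D B⁻¹ = B⁻¹ - A⁻¹`, so the left-hand side equals `tr (A⁻¹ D B⁻¹ D)`.
By Cauchy–Schwarz the Frobenius norm bounds the quadratic form of a matrix, so `A, B ≤ K • 1` in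
the Loewner order, and therefore `A⁻¹, B⁻¹ ≥ K⁻¹ • 1`. The trace of a product of two positive
semidefinite matrices is nonnegative, so replacing first `A⁻¹` and then `B⁻¹` by `K⁻¹ • 1` can
only decrease the trace, which leaves `K⁻² tr (D D) = K⁻² ‖D‖²`.
-/

open Matrix

/-- Trace inner product ⟨A,B⟩ = tr(Aᵀ B). -/
noncomputable def tInner {n : ℕ} (A B : Matrix (Fin n) (Fin n) ℝ) : ℝ :=
  Matrix.trace (Aᵀ * B)

/-- Frobenius norm. -/
noncomputable def frob {n : ℕ} (A : Matrix (Fin n) (Fin n) ℝ) : ℝ :=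
  Real.sqrt (tInner A A)

open scoped MatrixOrder

namespace Matrix

variable {ι : Type*} [Fintype ι]

theorem IsHermitian.dotProduct_mulVec_comm {M : Matrix ι ι ℝ} (hM : M.IsHermitian)
    (u v : ι → ℝ) : u ⬝ᵥ M *ᵥ v = v ⬝ᵥ M *ᵥ u := by
  rw [dotProduct_mulVec, ← mulVec_transpose, ← conjTranspose_eq_transpose_of_trivial, hM.eq,
    dotProduct_comm]

theorem PosSemidef.dotProduct_mulVec_sq_le {M : Matrix ι ι ℝ} (hM : M.PosSemidef)
    (u v : ι → ℝ) : (u ⬝ᵥ M *ᵥ v) ^ 2 ≤ (u ⬝ᵥ M *ᵥ u) * (v ⬝ᵥ M *ᵥ v) := by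
  have hquad : ∀ t : ℝ,
      0 ≤ (v ⬝ᵥ M *ᵥ v) * (t * t) + 2 * (u ⬝ᵥ M *ᵥ v) * t + u ⬝ᵥ M *ᵥ u := by
    intro t
    have h := hM.dotProduct_mulVec_nonneg (u + t • v)
    simp only [star_trivial, mulVec_add, mulVec_smul, add_dotProduct, dotProduct_add,
      smul_dotProduct, dotProduct_smul, smul_eq_mul,
      hM.isHermitian.dotProduct_mulVec_comm v u] at h
    linarith
  have hdiscr := discrim_le_zero hquad
  rw [discrim] at hdiscr
  linarith

variable [DecidableEq ι]

theorem PosSemidef.trace_mul_nonneg {P X : Matrix ι ι ℝ} (hP : P.PosSemidef)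
    (hX : X.PosSemidef) : 0 ≤ (P * X).trace := by
  obtain ⟨R, rfl⟩ := CStarAlgebra.nonneg_iff_eq_star_mul_self.mp hX.nonneg
  rw [star_eq_conjTranspose, ← mul_assoc, trace_mul_comm, ← mul_assoc]
  exact (hP.mul_mul_conjTranspose_same R).trace_nonneg

theorem mul_trace_le_trace_mul_of_smul_one_le {c : ℝ} {P X : Matrix ι ι ℝ} (hP : c • 1 ≤ P)
    (hX : X.PosSemidef) : c * X.trace ≤ (P * X).trace := by
  have h := (le_iff.mp hP).trace_mul_nonneg hX
  rwa [sub_mul, trace_sub, smul_one_mul, trace_smul, smul_eq_mul, sub_nonneg] at h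

theorem IsHermitian.le_smul_one_iff {A : Matrix ι ι ℝ} (hA : A.IsHermitian) {K : ℝ} :
    A ≤ K • 1 ↔ ∀ x, x ⬝ᵥ A *ᵥ x ≤ K * (x ⬝ᵥ x) := by
  have hsub : (K • 1 - A).IsHermitian := (isHermitian_one.smul (IsSelfAdjoint.all K)).sub hA
  rw [le_iff]
  simp only [posSemidef_iff_dotProduct_mulVec, hsub, true_and, star_trivial, sub_mulVec,
    dotProduct_sub, smul_mulVec, one_mulVec, dotProduct_smul, smul_eq_mul, sub_nonneg]

theorem IsHermitian.smul_one_le_iff {A : Matrix ι ι ℝ} (hA : A.IsHermitian) {K : ℝ} :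
    K • 1 ≤ A ↔ ∀ x, K * (x ⬝ᵥ x) ≤ x ⬝ᵥ A *ᵥ x := by
  have hsub : (A - K • 1).IsHermitian := hA.sub (isHermitian_one.smul (IsSelfAdjoint.all K))
  rw [le_iff]
  simp only [posSemidef_iff_dotProduct_mulVec, hsub, true_and, star_trivial, sub_mulVec,
    dotProduct_sub, smul_mulVec, one_mulVec, dotProduct_smul, smul_eq_mul, sub_nonneg]

theorem PosDef.inv_smul_one_le_inv {A : Matrix ι ι ℝ} (hA : A.PosDef) {K : ℝ} (hK : 0 < K)
    (hAK : A ≤ K • 1) : K⁻¹ • 1 ≤ A⁻¹ := by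
  rw [hA.inv.isHermitian.smul_one_le_iff]
  intro y
  have hAA : A *ᵥ (A⁻¹ *ᵥ y) = y := by
    rw [mulVec_mulVec, mul_nonsing_inv _ ((isUnit_iff_isUnit_det A).mp hA.isUnit), one_mulVec]
  -- Cauchy–Schwarz for the form of `A` at `A⁻¹ y` and `y`: `‖y‖⁴ ≤ ⟪y, A⁻¹ y⟫ ⟪y, A y⟫`
  have hcs := hA.posSemidef.dotProduct_mulVec_sq_le (A⁻¹ *ᵥ y) y
  rw [hA.isHermitian.dotProduct_mulVec_comm (A⁻¹ *ᵥ y) y, hAA, dotProduct_comm (A⁻¹ *ᵥ y)] at hcs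
  have hyAy := (hA.isHermitian.le_smul_one_iff.mp hAK) y
  have hy := dotProduct_self_star_nonneg y
  have hinv := hA.inv.posSemidef.dotProduct_mulVec_nonneg y
  simp only [star_trivial] at hy hinv
  rw [inv_mul_le_iff₀ hK]
  nlinarith [mul_le_mul_of_nonneg_left hyAy hinv, mul_nonneg hK.le hinv]

end Matrix

section Frobenius

variable {n : ℕ}

theorem tInner_self_eq_sum_sq (A : Matrix (Fin n) (Fin n) ℝ) :
    tInner A A = ∑ p : Fin n × Fin n, A p.1 p.2 ^ 2 := by
  rw [tInner, trace, Fintype.sum_prod_type, Finset.sum_comm]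
  simp [mul_apply, sq]

theorem frob_sq (A : Matrix (Fin n) (Fin n) ℝ) : frob A ^ 2 = tInner A A :=
  Real.sq_sqrt (by rw [tInner_self_eq_sum_sq]; positivity)

theorem tInner_eq_trace_mul {A : Matrix (Fin n) (Fin n) ℝ} (hA : A.IsHermitian)
    (B : Matrix (Fin n) (Fin n) ℝ) : tInner A B = (A * B).trace := by
  rw [tInner, ← conjTranspose_eq_transpose_of_trivial, hA.eq]

theorem dotProduct_mulVec_le_frob_mul (A : Matrix (Fin n) (Fin n) ℝ) (x : Fin n → ℝ) :
    x ⬝ᵥ A *ᵥ x ≤ frob A * (x ⬝ᵥ x) := by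
  have hcs := Finset.sum_mul_sq_le_sq_mul_sq Finset.univ (fun p : Fin n × Fin n => A p.1 p.2)
    (fun p => x p.1 * x p.2)
  have hquad : ∑ p : Fin n × Fin n, A p.1 p.2 * (x p.1 * x p.2) = x ⬝ᵥ A *ᵥ x := by
    simp only [Fintype.sum_prod_type, dotProduct, mulVec, Finset.mul_sum]
    exact Finset.sum_congr rfl fun i _ => Finset.sum_congr rfl fun j _ => by ring
  have hnorm : ∑ p : Fin n × Fin n, (x p.1 * x p.2) ^ 2 = (x ⬝ᵥ x) ^ 2 := by
    simp only [Fintype.sum_prod_type, dotProduct, sq, Finset.sum_mul_sum]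
    exact Finset.sum_congr rfl fun i _ => Finset.sum_congr rfl fun j _ => by ring
  rw [hquad, ← tInner_self_eq_sum_sq, hnorm, ← frob_sq, ← mul_pow] at hcs
  exact (abs_le_of_sq_le_sq hcs (mul_nonneg (Real.sqrt_nonneg _)
    (dotProduct_self_star_nonneg x))).trans' (le_abs_self _)

theorem Matrix.PosDef.frob_pos [NeZero n] {A : Matrix (Fin n) (Fin n) ℝ} (hA : A.PosDef) :
    0 < frob A := by
  have hx : (fun _ => 1 : Fin n → ℝ) ≠ 0 := fun h => by simpa using congrFun h 0
  exact pos_of_mul_pos_left ((hA.dotProduct_mulVec_pos hx).trans_le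
    (dotProduct_mulVec_le_frob_mul A _)) (dotProduct_self_star_nonneg _)

theorem Matrix.PosDef.inv_smul_one_le_inv_of_frob_le [NeZero n] {A : Matrix (Fin n) (Fin n) ℝ}
    (hA : A.PosDef) {K : ℝ} (hAK : frob A ≤ K) : K⁻¹ • 1 ≤ A⁻¹ := by
  have hA_le : A ≤ frob A • 1 :=
    hA.isHermitian.le_smul_one_iff.mpr (dotProduct_mulVec_le_frob_mul A)
  exact hA.inv_smul_one_le_inv (hA.frob_pos.trans_le hAK) (hA_le.trans (by gcongr))

theorem neg_tInner_inv_sub_inv {A B : Matrix (Fin n) (Fin n) ℝ} (hA : A.IsHermitian)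
    (hB : B.IsHermitian) (hA' : IsUnit A) (hB' : IsUnit B) :
    -tInner (A⁻¹ - B⁻¹) (A - B) = (A⁻¹ * ((A - B) * B⁻¹ * (A - B))).trace := by
  have hAB : A⁻¹ * (A - B) * B⁻¹ = B⁻¹ - A⁻¹ := by
    rw [mul_sub, sub_mul, nonsing_inv_mul A ((isUnit_iff_isUnit_det A).mp hA'), mul_assoc,
      mul_nonsing_inv B ((isUnit_iff_isUnit_det B).mp hB'), one_mul, mul_one]
  rw [tInner_eq_trace_mul (hA.inv.sub hB.inv), ← trace_neg, ← neg_mul, neg_sub, ← hAB]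
  simp only [mul_assoc]

end Frobenius

/-- On the set of symmetric positive definite matrices with Frobenius norm at most `K`,
the map `S ↦ -S⁻¹` is strongly monotone with modulus `K⁻²`. -/
theorem stmt0 {n : ℕ} (K : ℝ) (A B : Matrix (Fin n) (Fin n) ℝ)
    (hA : A.PosDef) (hB : B.PosDef) (hAK : frob A ≤ K) (hBK : frob B ≤ K) :
    -(tInner (A⁻¹ - B⁻¹) (A - B)) ≥ (K ^ 2)⁻¹ * frob (A - B) ^ 2 := by
  rcases Nat.eq_zero_or_pos n with rfl | hn
  · simp [tInner, frob]
  have : NeZero n := ⟨hn.ne'⟩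
  set D := A - B
  have hD : D.IsHermitian := hA.isHermitian.sub hB.isHermitian
  have hDD : (D * D).PosSemidef := by
    simpa only [hD.eq] using posSemidef_conjTranspose_mul_self D
  have hDBD : (D * B⁻¹ * D).PosSemidef := by
    simpa only [hD.eq] using hB.inv.posSemidef.conjTranspose_mul_mul_same D
  calc -tInner (A⁻¹ - B⁻¹) D = (A⁻¹ * (D * B⁻¹ * D)).trace :=
        neg_tInner_inv_sub_inv hA.isHermitian hB.isHermitian hA.isUnit hB.isUnit
    _ ≥ K⁻¹ * (D * B⁻¹ * D).trace :=
        mul_trace_le_trace_mul_of_smul_one_le (hA.inv_smul_one_le_inv_of_frob_le hAK) hDBD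
    _ = K⁻¹ * (B⁻¹ * (D * D)).trace := by
        rw [trace_mul_comm, ← mul_assoc, trace_mul_comm]
    _ ≥ K⁻¹ * (K⁻¹ * (D * D).trace) := by
        have hK : 0 < K := hA.frob_pos.trans_le hAK
        gcongr
        exact mul_trace_le_trace_mul_of_smul_one_le (hB.inv_smul_one_le_inv_of_frob_le hBK) hDD
    _ = (K ^ 2)⁻¹ * frob D ^ 2 := by
        rw [frob_sq, tInner_eq_trace_mul hD]; ring
end

section
/- Let λ > 0 and Σ ∈ S^n_{+}, and set L(S) := ⟨Σ, S⟩ - log(det S) + λ‖S‖₁ for S ∈ S^n_{++}. If S ∈ S^n_{++} satisfies ‖S‖₁ > K for some K > n/λ, then S is not a minimizer of L: there exists ε ∈ (0,1) with L((1-ε)S) < L(S). -/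
open Matrix

/-- Entrywise 1-norm of a matrix. -/
noncomputable def norm1 {n : ℕ} (A : Matrix (Fin n) (Fin n) ℝ) : ℝ :=
  ∑ i, ∑ j, |A i j|

/-- The objective `L(S) = ⟨Σ,S⟩ - log det S + λ‖S‖₁`. -/
noncomputable def Lfun {n : ℕ} (lam : ℝ) (Sig S : Matrix (Fin n) (Fin n) ℝ) : ℝ :=
  tInner Sig S - Real.log S.det + lam * norm1 S

/-!
Shrinking `S` to `t • S` with `t ∈ (0,1)` changes `L` by
`(t - 1) (⟨Σ,S⟩ + λ‖S‖₁) - n log t`. The first term is at most `-(1 - t) λ‖S‖₁` because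
`⟨Σ,S⟩ ≥ 0`, while `-log t ≤ (1 - t) / t`; so the change is negative as soon as
`n / (λ‖S‖₁) < t < 1`, an interval that is nonempty because `λ‖S‖₁ > λK > n`.
-/

open scoped ComplexOrder MatrixOrder in
theorem Matrix.PosSemidef.trace_mul_nonneg_s2 {m 𝕜 : Type*} [Fintype m] [RCLike 𝕜]
    {A B : Matrix m m 𝕜} (hA : A.PosSemidef) (hB : B.PosSemidef) : 0 ≤ (A * B).trace := by
  classical
  obtain ⟨C, rfl⟩ := CStarAlgebra.nonneg_iff_eq_star_mul_self.mp hB.nonneg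
  rw [← Matrix.mul_assoc, Matrix.trace_mul_cycle]
  exact (hA.mul_mul_conjTranspose_same C).trace_nonneg

theorem tInner_nonneg {n : ℕ} {A B : Matrix (Fin n) (Fin n) ℝ}
    (hA : A.PosSemidef) (hB : B.PosSemidef) : 0 ≤ tInner A B :=
  hA.transpose.trace_mul_nonneg_s2 hB

theorem tInner_smul_right {n : ℕ} (A B : Matrix (Fin n) (Fin n) ℝ) (t : ℝ) :
    tInner A (t • B) = t * tInner A B := by
  simp [tInner]

theorem norm1_smul {n : ℕ} (A : Matrix (Fin n) (Fin n) ℝ) (t : ℝ) :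
    norm1 (t • A) = |t| * norm1 A := by
  simp only [norm1, Matrix.smul_apply, smul_eq_mul, abs_mul, Finset.mul_sum]

theorem log_det_smul {n : ℕ} (S : Matrix (Fin n) (Fin n) ℝ) (hS : S.det ≠ 0) {t : ℝ}
    (ht : t ≠ 0) : Real.log (t • S).det = n * Real.log t + Real.log S.det := by
  rw [det_smul, Fintype.card_fin, Real.log_mul (pow_ne_zero n ht) hS, Real.log_pow]

theorem Lfun_smul {n : ℕ} (lam : ℝ) (Sig S : Matrix (Fin n) (Fin n) ℝ) (hS : S.det ≠ 0)
    {t : ℝ} (ht : 0 < t) :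
    Lfun lam Sig (t • S) =
      Lfun lam Sig S + (t - 1) * (tInner Sig S + lam * norm1 S) - n * Real.log t := by
  rw [Lfun, Lfun, tInner_smul_right, norm1_smul, log_det_smul S hS ht.ne', abs_of_pos ht]
  ring

theorem exists_mul_neg_log_lt {a c : ℝ} (ha : 0 ≤ a) (hac : a < c) :
    ∃ t ∈ Set.Ioo (0 : ℝ) 1, a * -Real.log t < (1 - t) * c := by
  have hc : 0 < c := ha.trans_lt hac
  have hac' : a / c < 1 := (div_lt_one hc).mpr hac
  set t := (1 + a / c) / 2
  have ht : 0 < t := by positivity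
  have ht1 : t < 1 := by simp only [t]; linarith
  refine ⟨t, ⟨ht, ht1⟩, ?_⟩
  have hlog : -Real.log t ≤ (1 - t) / t := by
    have := Real.one_sub_inv_le_log_of_pos ht
    rw [sub_div, div_self ht.ne', one_div]
    linarith
  have hat : a < t * c := by
    have : t * c = (c + a) / 2 := by simp only [t]; field_simp
    linarith
  calc a * -Real.log t ≤ a * ((1 - t) / t) := mul_le_mul_of_nonneg_left hlog ha
    _ = (1 - t) * (a / t) := by ring
    _ < (1 - t) * c := by gcongr; rwa [div_lt_iff₀' ht]

/-- If `‖S‖₁ > K` for some `K > n/λ`, then `S` is not a minimizer of `L`: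
there is `ε ∈ (0,1)` with `L((1-ε)S) < L(S)`. -/
theorem stmt2 {n : ℕ} (lam K : ℝ) (hlam : 0 < lam)
    (Sig : Matrix (Fin n) (Fin n) ℝ) (hSig : Sig.PosSemidef)
    (hK : (n : ℝ) / lam < K)
    (S : Matrix (Fin n) (Fin n) ℝ) (hS : S.PosDef) (hS1 : norm1 S > K) :
    ∃ ε : ℝ, ε ∈ Set.Ioo (0 : ℝ) 1 ∧ Lfun lam Sig ((1 - ε) • S) < Lfun lam Sig S := by
  have hn : (n : ℝ) < lam * norm1 S := calc
    (n : ℝ) < lam * K := by rwa [div_lt_iff₀' hlam] at hK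
    _ < lam * norm1 S := by gcongr
  obtain ⟨t, ⟨ht0, ht1⟩, hgain⟩ := exists_mul_neg_log_lt n.cast_nonneg hn
  refine ⟨1 - t, ⟨by linarith, by linarith⟩, ?_⟩
  have hT : 0 ≤ (1 - t) * tInner Sig S :=
    mul_nonneg (sub_nonneg.mpr ht1.le) (tInner_nonneg hSig hS.posSemidef)
  rw [sub_sub_cancel, Lfun_smul lam Sig S hS.det_pos.ne' ht0]
  linarith
end
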